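/- In the multi-treatment setting with true and estimated nuisances (see context), there exists a constant c depending only on B, ε, k and p such that for every codebook C = (c_1,…,c_k) in ℝ^p with |c_{j,a}| ≤ B for all j and a: |E[φ_C(η̂)] − E[φ_C(η)]| ≤ c·( max_{a} E|μ̂_a − μ_a| + max_{a} ‖μ̂_a − μ_a‖_{L²}·(‖μ̂_a − μ_a‖_{L²} + ‖π̂_a − π_a‖_{L²}) ); consequently the supremum over all such codebooks of the left-hand side obeys the same bound. -/

import Mathlib

/-!
In `φ_C(η')` the residual `𝟙{A=a}(Y − μ_a)` of the true regression is multiplied by the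
bounded 𝔊-measurable weight `2(μ'_a − [Π_C(μ')]_a)/π'_a`; since `E[𝟙{A=a}(Y − μ_a) | 𝔊] = 0`,
these terms have mean zero. What is left is the weight times `𝟙{A=a}(μ'_a − μ_a)` plus the
distortion `Σ_a (μ'_a − [Π_C(μ')]_a)²`, and for the true nuisances only the distortion remains.
The weight is bounded by `4B/ε`, and the distortion `x ↦ min_j ‖x − c_j‖²` is `4B`-Lipschitz
for the `ℓ¹` norm on the box `[-B, B]^p`, so the two expectations differ by at most
`(4B/ε + 4B) Σ_a E|μ̂_a − μ_a|`.
-/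

open MeasureTheory

/-- View a coordinate function as a point of Euclidean space. -/
def toE {p : ℕ} (f : Fin p → ℝ) : EuclideanSpace ℝ (Fin p) := WithLp.toLp 2 f

/-- The nearest-center index of `x` under the codebook `C`: the smallest `j`
minimizing `‖x − c_j‖₂`. -/
noncomputable def nearestIdx {p k : ℕ} (hk : 0 < k)
    (C : Fin k → EuclideanSpace ℝ (Fin p)) (x : EuclideanSpace ℝ (Fin p)) : Fin k :=
  (Finset.univ.filter fun j => ∀ m, ‖x - C j‖ ≤ ‖x - C m‖).min'
    (by
      obtain ⟨j, -, hj⟩ :=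
        Finset.exists_min_image (Finset.univ : Finset (Fin k)) (fun j => ‖x - C j‖)
          ⟨⟨0, hk⟩, Finset.mem_univ _⟩
      exact ⟨j, Finset.mem_filter.2 ⟨Finset.mem_univ _, fun m => hj m (Finset.mem_univ m)⟩⟩)

/-- The `L²(P)` norm of a real random variable, `‖W‖_{L²} = (E W²)^{1/2}`. -/
noncomputable def l2norm {Ω : Type*} {m : MeasurableSpace Ω} (P : Measure Ω) (f : Ω → ℝ) : ℝ :=
  Real.sqrt (∫ ω, (f ω) ^ 2 ∂P)

/-- The uncentered influence function
`φ_C(η) = Σ_a {φ_{2,a}(η) − 2φ_{1,a}(η)[Π_C(μ)]_a + [Π_C(μ)]_a²}`, where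
`φ_{1,a}(η) = (𝟙{A=a}/π_a)(Y − μ_A) + μ_a`,
`φ_{2,a}(η) = 2μ_a(𝟙{A=a}/π_a)(Y − μ_A) + μ_a²`, and `Π_C(μ) = c_{d(μ;C)}`. -/
noncomputable def phiC {Ω : Type*} {p k : ℕ} (hk : 0 < k)
    (A : Ω → Fin p) (Y : Ω → ℝ) (π μ : Fin p → Ω → ℝ)
    (C : Fin k → EuclideanSpace ℝ (Fin p)) (ω : Ω) : ℝ :=
  ∑ a, ((2 * μ a ω * ((if A ω = a then (1 : ℝ) else 0) / π a ω) * (Y ω - μ (A ω) ω)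
          + μ a ω ^ 2)
    - 2 * (((if A ω = a then (1 : ℝ) else 0) / π a ω) * (Y ω - μ (A ω) ω) + μ a ω)
        * C (nearestIdx hk C (toE fun b => μ b ω)) a
    + C (nearestIdx hk C (toE fun b => μ b ω)) a ^ 2)

section NearestCenter

variable {p k : ℕ} (hk : 0 < k) (C : Fin k → EuclideanSpace ℝ (Fin p))

theorem nearestIdx_isLeast (x : EuclideanSpace ℝ (Fin p)) :
    IsLeast {j | ∀ m, ‖x - C j‖ ≤ ‖x - C m‖} (nearestIdx hk C x) :=
  ⟨(Finset.mem_filter.1 (Finset.min'_mem _ _)).2,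
    fun _ hj => Finset.min'_le _ _ (Finset.mem_filter.2 ⟨Finset.mem_univ _, hj⟩)⟩

theorem nearestIdx_eq_iff (x : EuclideanSpace ℝ (Fin p)) (j : Fin k) :
    nearestIdx hk C x = j ↔ IsLeast {j | ∀ m, ‖x - C j‖ ≤ ‖x - C m‖} j :=
  ⟨fun h => h ▸ nearestIdx_isLeast hk C x, (nearestIdx_isLeast hk C x).unique⟩

theorem measurable_nearestIdx : Measurable (nearestIdx hk C) := by
  have hle : ∀ i m : Fin k,
      Measurable fun x : EuclideanSpace ℝ (Fin p) => ‖x - C i‖ ≤ ‖x - C m‖ := fun i m =>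
    measurableSet_setOfPred.1 (measurableSet_le (by fun_prop) (by fun_prop))
  refine measurable_to_countable' fun j => ?_
  simp only [Set.preimage, Set.mem_singleton_iff, nearestIdx_eq_iff, IsLeast, lowerBounds,
    Set.mem_ofPred_eq]
  exact measurableSet_setOfPred.2 <| (Measurable.forall (hle j)).and <|
    Measurable.forall fun i => (Measurable.forall (hle i)).imp measurable_const

theorem sum_sq_sub_nearestIdx_le (f : Fin p → ℝ) (j : Fin k) :
    ∑ a, (f a - C (nearestIdx hk C (toE f)) a) ^ 2 ≤ ∑ a, (f a - C j a) ^ 2 := by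
  have h := pow_le_pow_left₀ (norm_nonneg _) ((nearestIdx_isLeast hk C (toE f)).1 j) 2
  simpa [EuclideanSpace.norm_sq_eq, toE] using h

variable {C}

theorem sum_sq_sub_nearestIdx_sub_le {B : ℝ} (hC : ∀ j a, |C j a| ≤ B) {f g : Fin p → ℝ}
    (hf : ∀ a, |f a| ≤ B) (hg : ∀ a, |g a| ≤ B) :
    ∑ a, (f a - C (nearestIdx hk C (toE f)) a) ^ 2
        - ∑ a, (g a - C (nearestIdx hk C (toE g)) a) ^ 2
      ≤ 4 * B * ∑ a, |f a - g a| := by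
  set c := C (nearestIdx hk C (toE g))
  have hterm : ∀ a, (f a - c a) ^ 2 - (g a - c a) ^ 2 ≤ 4 * B * |f a - g a| := fun a => by
    have hsum : |f a + g a - 2 * c a| ≤ 4 * B := by
      obtain ⟨hc₁, hc₂⟩ := abs_le.1 (hC (nearestIdx hk C (toE g)) a)
      obtain ⟨hf₁, hf₂⟩ := abs_le.1 (hf a)
      obtain ⟨hg₁, hg₂⟩ := abs_le.1 (hg a)
      rw [abs_le]
      constructor <;> linarith
    calc (f a - c a) ^ 2 - (g a - c a) ^ 2 = (f a - g a) * (f a + g a - 2 * c a) := by ring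
      _ ≤ |f a - g a| * |f a + g a - 2 * c a| := by rw [← abs_mul]; exact le_abs_self _
      _ ≤ 4 * B * |f a - g a| := by rw [mul_comm]; gcongr
  calc _ ≤ ∑ a, (f a - c a) ^ 2 - ∑ a, (g a - c a) ^ 2 :=
        sub_le_sub_right (sum_sq_sub_nearestIdx_le hk C f _) _
    _ ≤ ∑ a, 4 * B * |f a - g a| := by
        rw [← Finset.sum_sub_distrib]; exact Finset.sum_le_sum fun a _ => hterm a
    _ = 4 * B * ∑ a, |f a - g a| := (Finset.mul_sum ..).symm

theorem abs_sum_sq_sub_nearestIdx_sub_le {B : ℝ} (hC : ∀ j a, |C j a| ≤ B) {f g : Fin p → ℝ}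
    (hf : ∀ a, |f a| ≤ B) (hg : ∀ a, |g a| ≤ B) :
    |∑ a, (f a - C (nearestIdx hk C (toE f)) a) ^ 2
        - ∑ a, (g a - C (nearestIdx hk C (toE g)) a) ^ 2|
      ≤ 4 * B * ∑ a, |f a - g a| := by
  rw [abs_sub_le_iff]
  refine ⟨sum_sq_sub_nearestIdx_sub_le hk hC hf hg, ?_⟩
  simpa only [abs_sub_comm] using sum_sq_sub_nearestIdx_sub_le hk hC hg hf

end NearestCenter

section CondExp

variable {Ω : Type*} {𝔊 m0 : MeasurableSpace Ω} {P : Measure Ω} [IsFiniteMeasure P]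

theorem integral_mul_eq_integral_mul_condExp (h𝔊 : 𝔊 ≤ m0) {f W : Ω → ℝ}
    (hf : StronglyMeasurable[𝔊] f) (hfW : Integrable (f * W) P) (hW : Integrable W P) :
    ∫ ω, f ω * W ω ∂P = ∫ ω, f ω * P[W|𝔊] ω ∂P :=
  (integral_condExp h𝔊).symm.trans
    (integral_congr_ae (condExp_mul_of_stronglyMeasurable_left hf hfW hW))

theorem integral_mul_sub_mul_eq_zero (h𝔊 : 𝔊 ≤ m0) {f μ X Z : Ω → ℝ}
    (hf : StronglyMeasurable[𝔊] f) (hμ : StronglyMeasurable[𝔊] μ)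
    (hf_top : MemLp f ⊤ P) (hμ_top : MemLp μ ⊤ P) (hX : Integrable X P) (hZ : Integrable Z P)
    (hZX : P[Z|𝔊] =ᵐ[P] μ * P[X|𝔊]) :
    ∫ ω, f ω * (Z ω - μ ω * X ω) ∂P = 0 := by
  have hμX : Integrable (μ * X) P := hX.mul_of_top_right hμ_top
  have hW : Integrable (Z - μ * X) P := hZ.sub hμX
  have hcond : P[Z - μ * X|𝔊] =ᵐ[P] 0 := by
    filter_upwards [condExp_sub hZ hμX 𝔊, condExp_mul_of_stronglyMeasurable_left hμ hμX hX, hZX]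
      with ω h₁ h₂ h₃
    simp [h₁, h₂, h₃]
  calc ∫ ω, f ω * (Z ω - μ ω * X ω) ∂P = ∫ ω, f ω * P[Z - μ * X|𝔊] ω ∂P :=
        integral_mul_eq_integral_mul_condExp h𝔊 hf (hW.mul_of_top_right hf_top) hW
    _ = ∫ _, (0 : ℝ) ∂P := integral_congr_ae (hcond.mono fun ω h => by simp [h])
    _ = 0 := integral_zero _ _

end CondExp

section Nuisance

variable {Ω : Type*} {p k : ℕ} (hk : 0 < k)

/-- `[Π_C(μ(ω))]_a`. -/
noncomputable def projCoord (C : Fin k → EuclideanSpace ℝ (Fin p)) (μ : Fin p → Ω → ℝ)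
    (a : Fin p) (ω : Ω) : ℝ :=
  C (nearestIdx hk C (toE fun b => μ b ω)) a

/-- `2(μ_a − [Π_C(μ)]_a)/π_a`, the coefficient of the residual `𝟙{A=a}(Y − μ_a)` in `φ_C(η)`. -/
noncomputable def residualWeight (C : Fin k → EuclideanSpace ℝ (Fin p)) (π μ : Fin p → Ω → ℝ)
    (a : Fin p) (ω : Ω) : ℝ :=
  2 * (μ a ω - projCoord hk C μ a ω) / π a ω

/-- What is left of `φ_C(η')` after the residuals `𝟙{A=a}(Y − μ_a)` of the true regression `μ`
are removed; these are orthogonal to `𝔊`, so both have the same expectation. -/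
noncomputable def phiCReduced (A : Ω → Fin p) (π' μ' μ : Fin p → Ω → ℝ)
    (C : Fin k → EuclideanSpace ℝ (Fin p)) (ω : Ω) : ℝ :=
  ∑ a, ((μ' a ω - projCoord hk C μ' a ω) ^ 2
    - residualWeight hk C π' μ' a ω * ((if A ω = a then 1 else 0) * (μ' a ω - μ a ω)))

theorem phiC_eq_add (A : Ω → Fin p) (Y : Ω → ℝ) (π' μ' μ : Fin p → Ω → ℝ)
    (C : Fin k → EuclideanSpace ℝ (Fin p)) (ω : Ω) :
    phiC hk A Y π' μ' C ω =
      ∑ a, residualWeight hk C π' μ' a ω * ((if A ω = a then 1 else 0) * (Y ω - μ a ω))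
        + phiCReduced hk A π' μ' μ C ω := by
  rw [phiC, phiCReduced, ← Finset.sum_add_distrib]
  refine Finset.sum_congr rfl fun a _ => ?_
  rw [residualWeight, projCoord]
  by_cases h : A ω = a
  · subst h; simp only [if_true]; ring
  · simp only [if_neg h]; ring

theorem phiCReduced_self (A : Ω → Fin p) (π μ : Fin p → Ω → ℝ)
    (C : Fin k → EuclideanSpace ℝ (Fin p)) (ω : Ω) :
    phiCReduced hk A π μ μ C ω = ∑ a, (μ a ω - projCoord hk C μ a ω) ^ 2 := by
  simp [phiCReduced]

variable {C : Fin k → EuclideanSpace ℝ (Fin p)}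

theorem measurable_projCoord {mΩ : MeasurableSpace Ω} {μ : Fin p → Ω → ℝ}
    (hμ : ∀ b, Measurable (μ b)) (a : Fin p) : Measurable (projCoord hk C μ a) :=
  (measurable_of_countable fun j => C j a).comp <| (measurable_nearestIdx hk C).comp <|
    (WithLp.measurable_toLp 2 _).comp (measurable_pi_lambda _ hμ)

theorem measurable_residualWeight {mΩ : MeasurableSpace Ω} {π μ : Fin p → Ω → ℝ}
    (hπ : ∀ a, Measurable (π a)) (hμ : ∀ a, Measurable (μ a)) (a : Fin p) :
    Measurable (residualWeight hk C π μ a) :=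
  (measurable_const.mul ((hμ a).sub (measurable_projCoord hk hμ a))).div (hπ a)

theorem abs_residualWeight_le {B ε : ℝ} (hε : 0 < ε) (hC : ∀ j a, |C j a| ≤ B)
    {π μ : Fin p → Ω → ℝ} {a : Fin p} {ω : Ω} (hμ : |μ a ω| ≤ B) (hπ : ε ≤ π a ω) :
    |residualWeight hk C π μ a ω| ≤ 4 * B / ε := by
  have hB : 0 ≤ B := (abs_nonneg _).trans hμ
  have hnum : |2 * (μ a ω - projCoord hk C μ a ω)| ≤ 4 * B := by
    obtain ⟨hc₁, hc₂⟩ := abs_le.1 (hC (nearestIdx hk C (toE fun b => μ b ω)) a)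
    obtain ⟨hμ₁, hμ₂⟩ := abs_le.1 hμ
    rw [projCoord, abs_le]
    constructor <;> linarith
  rw [residualWeight, abs_div, abs_of_pos (hε.trans_le hπ)]
  exact div_le_div₀ (by positivity) hnum hε hπ

theorem abs_phiCReduced_sub_le {B ε : ℝ} (hε : 0 < ε) (hC : ∀ j a, |C j a| ≤ B)
    (A : Ω → Fin p) {π π' μ μ' : Fin p → Ω → ℝ} {ω : Ω}
    (hμ' : ∀ a, |μ' a ω| ≤ B) (hμ : ∀ a, |μ a ω| ≤ B) (hπ' : ∀ a, ε ≤ π' a ω) :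
    |phiCReduced hk A π' μ' μ C ω - phiCReduced hk A π μ μ C ω|
      ≤ (4 * B / ε + 4 * B) * ∑ a, |μ' a ω - μ a ω| := by
  set S := ∑ a, residualWeight hk C π' μ' a ω * ((if A ω = a then 1 else 0) * (μ' a ω - μ a ω))
  have hS : |S| ≤ 4 * B / ε * ∑ a, |μ' a ω - μ a ω| := by
    refine (Finset.abs_sum_le_sum_abs _ _).trans ?_
    rw [Finset.mul_sum]
    refine Finset.sum_le_sum fun a _ => ?_
    have hw := abs_residualWeight_le hk hε hC (hμ' a) (hπ' a)
    have hind : |(if A ω = a then (1 : ℝ) else 0)| ≤ 1 := by split_ifs <;> simp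
    rw [abs_mul, abs_mul]
    have hB : 0 ≤ B := (abs_nonneg _).trans (hμ' a)
    calc _ ≤ 4 * B / ε * (1 * |μ' a ω - μ a ω|) := by gcongr
      _ = _ := by rw [one_mul]
  have hsq := abs_sum_sq_sub_nearestIdx_sub_le hk hC hμ' hμ
  rw [phiCReduced_self, phiCReduced, Finset.sum_sub_distrib]
  calc _ = |(∑ a, (μ' a ω - projCoord hk C μ' a ω) ^ 2
          - ∑ a, (μ a ω - projCoord hk C μ a ω) ^ 2) - S| := by congr 1; ring
    _ ≤ _ := abs_sub _ _
    _ ≤ 4 * B * ∑ a, |μ' a ω - μ a ω| + 4 * B / ε * ∑ a, |μ' a ω - μ a ω| := add_le_add hsq hS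
    _ = _ := by ring

end Nuisance

section Integrals

variable {Ω : Type*} {𝔊 m0 : MeasurableSpace Ω} {P : Measure Ω}
  {p k : ℕ} (hk : 0 < k) {C : Fin k → EuclideanSpace ℝ (Fin p)}
  {A : Ω → Fin p} {Y : Ω → ℝ} {B ε : ℝ}

structure IsBoundedNuisance (P : Measure Ω) (𝔊 : MeasurableSpace Ω) (B ε : ℝ)
    (π μ : Fin p → Ω → ℝ) : Prop where
  measurable_propensity : ∀ a, Measurable[𝔊] (π a)
  measurable_regression : ∀ a, Measurable[𝔊] (μ a)
  abs_regression_le : ∀ a, ∀ᵐ ω ∂P, |μ a ω| ≤ B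
  le_propensity : ∀ a, ∀ᵐ ω ∂P, ε ≤ π a ω

theorem memLp_top_of_measurable_of_abs_le {f : Ω → ℝ} {M : ℝ} (hf : Measurable f)
    (hb : ∀ᵐ ω ∂P, |f ω| ≤ M) : MemLp f ⊤ P :=
  memLp_top_of_bound hf.aestronglyMeasurable M (by simpa only [Real.norm_eq_abs] using hb)

theorem memLp_top_ite_eq (hA : Measurable A) (a : Fin p) :
    MemLp (fun ω => if A ω = a then (1 : ℝ) else 0) ⊤ P :=
  memLp_top_of_measurable_of_abs_le
    (Measurable.ite (hA (measurableSet_singleton a)) measurable_const measurable_const)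
    (M := 1) (.of_forall fun ω => by split_ifs <;> simp)

namespace IsBoundedNuisance

variable {π μ : Fin p → Ω → ℝ}

theorem memLp_regression (hη : IsBoundedNuisance P 𝔊 B ε π μ) (h𝔊 : 𝔊 ≤ m0) (a : Fin p) :
    MemLp (μ a) ⊤ P :=
  memLp_top_of_measurable_of_abs_le ((hη.measurable_regression a).mono h𝔊 le_rfl)
    (hη.abs_regression_le a)

theorem memLp_residualWeight (hη : IsBoundedNuisance P 𝔊 B ε π μ) (h𝔊 : 𝔊 ≤ m0)
    (hε : 0 < ε) (hC : ∀ j a, |C j a| ≤ B) (a : Fin p) :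
    MemLp (residualWeight hk C π μ a) ⊤ P :=
  memLp_top_of_measurable_of_abs_le
    ((measurable_residualWeight hk hη.measurable_propensity hη.measurable_regression a).mono
      h𝔊 le_rfl)
    (by
      filter_upwards [hη.abs_regression_le a, hη.le_propensity a] with ω hμ hπ
      exact abs_residualWeight_le hk hε hC hμ hπ)

end IsBoundedNuisance

theorem memLp_top_phiCReduced (h𝔊 : 𝔊 ≤ m0) (hε : 0 < ε) (hC : ∀ j a, |C j a| ≤ B)
    (hA : Measurable A) {π' μ' μ : Fin p → Ω → ℝ} (hη' : IsBoundedNuisance P 𝔊 B ε π' μ')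
    (hμ : ∀ a, Measurable (μ a)) (hμb : ∀ a, ∀ᵐ ω ∂P, |μ a ω| ≤ B) :
    MemLp (phiCReduced hk A π' μ' μ C) ⊤ P := by
  refine memLp_finsetSum _ fun a _ => ?_
  have hproj : MemLp (projCoord hk C μ' a) ⊤ P :=
    memLp_top_of_measurable_of_abs_le
      (measurable_projCoord hk (fun b => (hη'.measurable_regression b).mono h𝔊 le_rfl) a)
      (.of_forall fun ω => hC _ a)
  have hdist := (hη'.memLp_regression h𝔊 a).sub hproj
  have hresid := (((hη'.memLp_regression h𝔊 a).sub (memLp_top_of_measurable_of_abs_le (hμ a)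
    (hμb a))).mul (r := ⊤) (memLp_top_ite_eq hA a)).mul (r := ⊤)
      (hη'.memLp_residualWeight hk h𝔊 hε hC a)
  convert (hdist.mul (r := ⊤) hdist).sub hresid using 1
  ext ω
  simp only [Pi.sub_apply, Pi.mul_apply, sq]

theorem integral_phiC_eq_integral_phiCReduced [IsFiniteMeasure P] (h𝔊 : 𝔊 ≤ m0) (hε : 0 < ε)
    (hC : ∀ j a, |C j a| ≤ B) (hA : Measurable A) (hY : Measurable Y)
    (hYb : ∀ᵐ ω ∂P, |Y ω| ≤ B) {π μ : Fin p → Ω → ℝ}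
    (hπ : ∀ a, π a =ᵐ[P] P[fun ω => if A ω = a then (1 : ℝ) else 0|𝔊])
    (hμ : ∀ a, Measurable[𝔊] (μ a)) (hμb : ∀ a, ∀ᵐ ω ∂P, |μ a ω| ≤ B)
    (hπμ : ∀ a, (fun ω => π a ω * μ a ω)
      =ᵐ[P] P[fun ω => Y ω * (if A ω = a then (1 : ℝ) else 0)|𝔊])
    {π' μ' : Fin p → Ω → ℝ} (hη' : IsBoundedNuisance P 𝔊 B ε π' μ') :
    ∫ ω, phiC hk A Y π' μ' C ω ∂P = ∫ ω, phiCReduced hk A π' μ' μ C ω ∂P := by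
  have hμL : ∀ a, MemLp (μ a) ⊤ P := fun a =>
    memLp_top_of_measurable_of_abs_le ((hμ a).mono h𝔊 le_rfl) (hμb a)
  have hYL : MemLp Y ⊤ P := memLp_top_of_measurable_of_abs_le hY hYb
  have hwL := hη'.memLp_residualWeight hk h𝔊 hε hC
  have hR : ∀ a, Integrable (fun ω => residualWeight hk C π' μ' a ω
      * ((if A ω = a then 1 else 0) * (Y ω - μ a ω))) P := fun a =>
    ((((hYL.sub (hμL a)).mul (r := ⊤) (memLp_top_ite_eq hA a)).mul (r := ⊤)
      (hwL a))).integrable le_top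
  have horth : ∀ a, ∫ ω, residualWeight hk C π' μ' a ω
      * ((if A ω = a then 1 else 0) * (Y ω - μ a ω)) ∂P = 0 := fun a => by
    have hZX : P[fun ω => Y ω * (if A ω = a then (1 : ℝ) else 0)|𝔊]
        =ᵐ[P] μ a * P[fun ω => if A ω = a then (1 : ℝ) else 0|𝔊] := by
      filter_upwards [hπμ a, hπ a] with ω h₁ h₂
      rw [Pi.mul_apply, ← h₁, ← h₂, mul_comm]
    have := integral_mul_sub_mul_eq_zero h𝔊
      (measurable_residualWeight hk hη'.measurable_propensity hη'.measurable_regression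
        a).stronglyMeasurable
      (hμ a).stronglyMeasurable (hwL a) (hμL a) ((memLp_top_ite_eq hA a).integrable le_top)
      (((memLp_top_ite_eq hA a).mul (r := ⊤) hYL).integrable le_top) hZX
    exact (integral_congr_ae (.of_forall fun ω => by rw [Pi.mul_apply]; ring)).trans this
  have hred := (memLp_top_phiCReduced hk h𝔊 hε hC hA hη' (fun a => (hμ a).mono h𝔊 le_rfl)
    hμb).integrable le_top
  calc ∫ ω, phiC hk A Y π' μ' C ω ∂P
      = ∫ ω, (∑ a, residualWeight hk C π' μ' a ω
          * ((if A ω = a then 1 else 0) * (Y ω - μ a ω))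
          + phiCReduced hk A π' μ' μ C ω) ∂P :=
        integral_congr_ae (.of_forall fun ω => phiC_eq_add hk A Y π' μ' μ C ω)
    _ = ∑ a, ∫ ω, residualWeight hk C π' μ' a ω
          * ((if A ω = a then 1 else 0) * (Y ω - μ a ω)) ∂P
          + ∫ ω, phiCReduced hk A π' μ' μ C ω ∂P := by
        rw [integral_add (integrable_finsetSum _ fun a _ => hR a) hred,
          integral_finsetSum _ fun a _ => hR a]
    _ = ∫ ω, phiCReduced hk A π' μ' μ C ω ∂P := by
        simp only [horth, Finset.sum_const_zero, zero_add]

theorem abs_integral_phiC_sub_le [IsFiniteMeasure P] (h𝔊 : 𝔊 ≤ m0) (hε : 0 < ε)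
    (hC : ∀ j a, |C j a| ≤ B)
    (hA : Measurable A) (hY : Measurable Y) (hYb : ∀ᵐ ω ∂P, |Y ω| ≤ B) {π μ : Fin p → Ω → ℝ}
    (hπ : ∀ a, π a =ᵐ[P] P[fun ω => if A ω = a then (1 : ℝ) else 0|𝔊])
    (hπμ : ∀ a, (fun ω => π a ω * μ a ω)
      =ᵐ[P] P[fun ω => Y ω * (if A ω = a then (1 : ℝ) else 0)|𝔊])
    (hη : IsBoundedNuisance P 𝔊 B ε π μ)
    {π' μ' : Fin p → Ω → ℝ} (hη' : IsBoundedNuisance P 𝔊 B ε π' μ') :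
    |∫ ω, phiC hk A Y π' μ' C ω ∂P - ∫ ω, phiC hk A Y π μ C ω ∂P|
      ≤ (4 * B / ε + 4 * B) * ∑ a, ∫ ω, |μ' a ω - μ a ω| ∂P := by
  have hμ : ∀ a, Measurable (μ a) := fun a => (hη.measurable_regression a).mono h𝔊 le_rfl
  have hd : ∀ a, Integrable (fun ω => |μ' a ω - μ a ω|) P := fun a =>
    (((hη'.memLp_regression h𝔊 a).sub (hη.memLp_regression h𝔊 a)).integrable le_top).abs
  have hbound : ∀ᵐ ω ∂P, |phiCReduced hk A π' μ' μ C ω - phiCReduced hk A π μ μ C ω|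
      ≤ (4 * B / ε + 4 * B) * ∑ a, |μ' a ω - μ a ω| := by
    filter_upwards [ae_all_iff.2 hη'.abs_regression_le, ae_all_iff.2 hη.abs_regression_le,
      ae_all_iff.2 hη'.le_propensity] with ω hμ'ω hμω hπ'ω
    exact abs_phiCReduced_sub_le hk hε hC A hμ'ω hμω hπ'ω
  rw [integral_phiC_eq_integral_phiCReduced hk h𝔊 hε hC hA hY hYb hπ hη.measurable_regression
      hη.abs_regression_le hπμ hη',
    integral_phiC_eq_integral_phiCReduced hk h𝔊 hε hC hA hY hYb hπ hη.measurable_regression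
      hη.abs_regression_le hπμ hη,
    ← integral_sub
      ((memLp_top_phiCReduced hk h𝔊 hε hC hA hη' hμ hη.abs_regression_le).integrable le_top)
      ((memLp_top_phiCReduced hk h𝔊 hε hC hA hη hμ hη.abs_regression_le).integrable le_top)]
  calc _ ≤ ∫ ω, |phiCReduced hk A π' μ' μ C ω - phiCReduced hk A π μ μ C ω| ∂P :=
        abs_integral_le_integral_abs
    _ ≤ ∫ ω, (4 * B / ε + 4 * B) * ∑ a, |μ' a ω - μ a ω| ∂P :=
        integral_mono_of_nonneg (.of_forall fun _ => abs_nonneg _)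
          ((integrable_finsetSum _ fun a _ => hd a).const_mul _) hbound
    _ = _ := by rw [integral_const_mul, integral_finsetSum _ fun a _ => hd a]

end Integrals

/-- In the multi-treatment setting, there is a constant `c` depending
only on `B, ε, k, p` such that, uniformly over codebooks `C` with all center coordinates
bounded by `B`, `|E[φ_C(η̂)] − E[φ_C(η)]| ≤ c·( max_a E|μ̂_a − μ_a| +
max_a ‖μ̂_a − μ_a‖_{L²}(‖μ̂_a − μ_a‖_{L²} + ‖π̂_a − π_a‖_{L²}) )`. -/
theorem stmt_16 (B ε : ℝ) (hB : 0 < B) (hε : 0 < ε) (k p : ℕ) (hk : 0 < k) :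
    ∃ c : ℝ, 0 ≤ c ∧
      ∀ (Ω : Type) (m0 : MeasurableSpace Ω) (P : Measure Ω), IsProbabilityMeasure P →
      ∀ 𝔊 : MeasurableSpace Ω, 𝔊 ≤ m0 →
      ∀ A : Ω → Fin p, Measurable A →
      ∀ Y : Ω → ℝ, Measurable Y → (∀ᵐ ω ∂P, |Y ω| ≤ B) →
      ∀ π μv : Fin p → Ω → ℝ,
        (∀ a, Measurable[𝔊] (π a)) →
        (∀ a, π a =ᵐ[P] P[fun ω => if A ω = a then (1 : ℝ) else 0|𝔊]) →
        (∀ a, ∀ᵐ ω ∂P, ε ≤ π a ω) →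
        (∀ a, Measurable[𝔊] (μv a)) → (∀ a, ∀ᵐ ω ∂P, |μv a ω| ≤ B) →
        (∀ a, (fun ω => π a ω * μv a ω)
            =ᵐ[P] P[fun ω => Y ω * (if A ω = a then (1 : ℝ) else 0)|𝔊]) →
      ∀ μh πh : Fin p → Ω → ℝ,
        (∀ a, Measurable[𝔊] (μh a)) → (∀ a, Measurable[𝔊] (πh a)) →
        (∀ a, ∀ᵐ ω ∂P, |μh a ω| ≤ B) →
        (∀ a, ∀ᵐ ω ∂P, ε ≤ πh a ω ∧ πh a ω ≤ 1) →
      ∀ C : Fin k → EuclideanSpace ℝ (Fin p), (∀ j a, |C j a| ≤ B) →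
        |∫ ω, phiC hk A Y πh μh C ω ∂P - ∫ ω, phiC hk A Y π μv C ω ∂P| ≤
          c * ((⨆ a : Fin p, ∫ ω, |μh a ω - μv a ω| ∂P) +
            ⨆ a : Fin p, l2norm P (fun ω => μh a ω - μv a ω) *
              (l2norm P (fun ω => μh a ω - μv a ω) +
                l2norm P (fun ω => πh a ω - π a ω))) := by
  refine ⟨p * (4 * B / ε + 4 * B), by positivity, ?_⟩
  intro Ω m0 P _ 𝔊 h𝔊 A hA Y hY hYb π μ hπm hπ hπε hμm hμb hπμ μh πh hμhm hπhm hμhb hπhb C hC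
  have hη : IsBoundedNuisance P 𝔊 B ε π μ := ⟨hπm, hμm, hμb, hπε⟩
  have hηh : IsBoundedNuisance P 𝔊 B ε πh μh :=
    ⟨hπhm, hμhm, hμhb, fun a => (hπhb a).mono fun _ h => h.1⟩
  have hL1 : ∑ a, ∫ ω, |μh a ω - μ a ω| ∂P ≤ p * ⨆ a : Fin p, ∫ ω, |μh a ω - μ a ω| ∂P := by
    simpa using Finset.sum_le_card_nsmul Finset.univ _ _ fun a _ =>
      le_ciSup (Set.finite_range fun a : Fin p => ∫ ω, |μh a ω - μ a ω| ∂P).bddAbove a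
  have hL2 : 0 ≤ ⨆ a : Fin p, l2norm P (fun ω => μh a ω - μ a ω) *
      (l2norm P (fun ω => μh a ω - μ a ω) + l2norm P (fun ω => πh a ω - π a ω)) :=
    Real.iSup_nonneg fun a => by unfold l2norm; positivity
  calc _ ≤ (4 * B / ε + 4 * B) * ∑ a, ∫ ω, |μh a ω - μ a ω| ∂P :=
        abs_integral_phiC_sub_le hk h𝔊 hε hC (hA.mono h𝔊 le_rfl) (hY.mono h𝔊 le_rfl) hYb hπ hπμ
          hη hηh
    _ ≤ (4 * B / ε + 4 * B) * (p * ⨆ a : Fin p, ∫ ω, |μh a ω - μ a ω| ∂P) := by gcongr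
    _ ≤ _ := by
        rw [← mul_assoc, mul_comm _ (p : ℝ)]
        exact mul_le_mul_of_nonneg_left (le_add_of_nonneg_right hL2) (by positivity)
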